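/- Let Q be a finite set with demands d_i ∈ (0, 1/2] for each i ∈ Q (i.e., no element has demand exceeding 1/2). If Σ_{i∈Q} d_i ≤ 1, then Σ_{i∈Q} s(d_i) < 0.4232. -/

import Mathlib

/-!
An item `x ∈ (1/(k+1), 1/k]` has slack `1/(k(k+1)) < x/k`, so items of size at most `1/n` contribute
at most `1/n` times their total size. Peeling off the items of the top size class `(1/(n+1), 1/n]`
gives the greedy extremal configuration: two items just above `1/3`, then one just above `1/4`,
one just above `1/13` and the rest below `1/156`, whose slacks add up to at most
`1/3 + 1/12 + 1/156 + 1/156² < 0.4232`.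
-/

open Finset

noncomputable def slack (x : ℝ) : ℝ :=
  1 / ((⌊1 / x⌋₊ : ℝ) * ((⌊1 / x⌋₊ : ℝ) + 1))

lemma le_floor_one_div {n : ℕ} (hn : 0 < n) {x : ℝ} (hx : x ∈ Set.Ioc 0 (1 / (n : ℝ))) :
    n ≤ ⌊1 / x⌋₊ :=
  Nat.le_floor <| (le_one_div hx.1 (Nat.cast_pos.2 hn)).1 hx.2

lemma slack_le_of_le_one_div {n : ℕ} (hn : 0 < n) {x : ℝ} (hx : x ∈ Set.Ioc 0 (1 / (n : ℝ))) :
    slack x ≤ 1 / (n * (n + 1)) := by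
  have hk : (n : ℝ) ≤ ⌊1 / x⌋₊ := by exact_mod_cast le_floor_one_div hn hx
  unfold slack
  gcongr

lemma slack_le_div_of_le_one_div {n : ℕ} (hn : 0 < n) {x : ℝ} (hx : x ∈ Set.Ioc 0 (1 / (n : ℝ))) :
    slack x ≤ x / n := by
  have hkn : (n : ℝ) ≤ ⌊1 / x⌋₊ := by exact_mod_cast le_floor_one_div hn hx
  set k : ℝ := (⌊1 / x⌋₊ : ℝ)
  have hn0 : (0 : ℝ) < n := by exact_mod_cast hn
  have hk0 : 0 < k := hn0.trans_le hkn
  have hxk : 1 < x * (k + 1) := by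
    have := Nat.lt_floor_add_one (1 / x)
    rwa [div_lt_iff₀ hx.1, mul_comm] at this
  calc slack x = 1 / (k * (k + 1)) := rfl
    _ ≤ x / k := by rw [div_le_div_iff₀ (by positivity) (by linarith)]; nlinarith
    _ ≤ x / n := div_le_div_of_nonneg_left hx.1.le hn0 hkn

section Sums

variable {ι : Type*} {d : ι → ℝ}

lemma sum_slack_le_sum_div {n : ℕ} (hn : 0 < n) {S : Finset ι}
    (hS : ∀ i ∈ S, d i ∈ Set.Ioc 0 (1 / (n : ℝ))) :
    ∑ i ∈ S, slack (d i) ≤ (∑ i ∈ S, d i) / n := by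
  rw [sum_div]
  exact sum_le_sum fun i hi => slack_le_div_of_le_one_div hn (hS i hi)

lemma forall_mem_Ioc_of_sum_le {S : Finset ι} (hpos : ∀ i ∈ S, 0 < d i) {T : ℝ}
    (hsum : ∑ i ∈ S, d i ≤ T) : ∀ i ∈ S, d i ∈ Set.Ioc 0 T :=
  fun i hi => ⟨hpos i hi, (single_le_sum (fun j hj => (hpos j hj).le) hi).trans hsum⟩

lemma card_le_of_forall_lt_of_sum_le {S : Finset ι} {c : ℝ} (hc : 0 ≤ c) (h : ∀ i ∈ S, c < d i)
    {m : ℕ} (hsum : ∑ i ∈ S, d i ≤ (m + 1) * c) : #S ≤ m := by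
  by_contra! hm
  have hlt : ∑ _i ∈ S, c < ∑ i ∈ S, d i :=
    sum_lt_sum_of_nonempty (card_pos.1 (by omega)) h
  have hm' : (m : ℝ) + 1 ≤ #S := by exact_mod_cast hm
  rw [sum_const, nsmul_eq_mul] at hlt
  nlinarith

/-- `m` counts the items of `S` in `(1/(n+1), 1/n]`, whose slack is `1/(n(n+1))`; `R` consists of
the other items. -/
lemma exists_sum_slack_le_card_add {n M : ℕ} (hn : 0 < n) {T : ℝ} (hT : T ≤ (M + 1) / (n + 1))
    {S : Finset ι} (hS : ∀ i ∈ S, d i ∈ Set.Ioc 0 (1 / (n : ℝ))) (hsum : ∑ i ∈ S, d i ≤ T) :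
    ∃ m ≤ M, ∃ R : Finset ι, (∀ i ∈ R, d i ∈ Set.Ioc 0 (1 / ((n + 1 : ℕ) : ℝ))) ∧
      ∑ i ∈ R, d i ≤ T - m / (n + 1) ∧
      ∑ i ∈ S, slack (d i) ≤ m / (n * (n + 1)) + ∑ i ∈ R, slack (d i) := by
  classical
  set p : ι → Prop := fun i => 1 / (n + 1) < d i
  set L := S.filter p
  set R := S.filter (fun i => ¬ p i)
  have hR : ∀ i ∈ R, d i ∈ Set.Ioc 0 (1 / ((n + 1 : ℕ) : ℝ)) := fun i hi =>
    ⟨(hS i (mem_filter.1 hi).1).1, by push_cast; exact not_lt.1 (mem_filter.1 hi).2⟩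
  have hsplit := sum_filter_add_sum_filter_not S p d
  have hsplit_slack := sum_filter_add_sum_filter_not S p (fun i => slack (d i))
  have hR_nonneg : 0 ≤ ∑ i ∈ R, d i := sum_nonneg fun i hi => (hR i hi).1.le
  have hL_card : #L ≤ M :=
    card_le_of_forall_lt_of_sum_le (by positivity) (fun i hi => (mem_filter.1 hi).2)
      (by rw [mul_one_div]; linarith)
  have hL_size : #L • (1 / ((n : ℝ) + 1)) ≤ ∑ i ∈ L, d i :=
    card_nsmul_le_sum L d _ fun i hi => (mem_filter.1 hi).2.le
  have hL_slack : ∑ i ∈ L, slack (d i) ≤ #L • (1 / ((n : ℝ) * (n + 1))) :=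
    sum_le_card_nsmul L _ _ fun i hi => slack_le_of_le_one_div hn (hS i (mem_filter.1 hi).1)
  rw [nsmul_eq_mul, mul_one_div] at hL_size hL_slack
  exact ⟨#L, hL_card, R, hR, by linarith, by linarith⟩

lemma sum_slack_le_of_sum_le_one_div_twelve {S : Finset ι} (hpos : ∀ i ∈ S, 0 < d i)
    (hsum : ∑ i ∈ S, d i ≤ 1 / 12) :
    ∑ i ∈ S, slack (d i) ≤ 1 / 156 + 1 / 156 ^ 2 := by
  obtain ⟨m, hm, R, hR, hR_sum, hS_slack⟩ := exists_sum_slack_le_card_add (n := 12) (M := 1)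
    (by norm_num) (by norm_num) (by simpa using forall_mem_Ioc_of_sum_le hpos hsum) hsum
  interval_cases m
  · have := sum_slack_le_sum_div (by norm_num) hR
    norm_num at hR_sum hS_slack this
    linarith
  · norm_num at hR_sum hS_slack
    have := sum_slack_le_sum_div (n := 156) (by norm_num)
      (by simpa using forall_mem_Ioc_of_sum_le (fun i hi => (hR i hi).1) hR_sum)
    norm_num at this
    linarith

lemma sum_slack_le_of_sum_le_one_div_three {S : Finset ι} (hpos : ∀ i ∈ S, 0 < d i)
    (hsum : ∑ i ∈ S, d i ≤ 1 / 3) :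
    ∑ i ∈ S, slack (d i) ≤ 1 / 12 + 1 / 156 + 1 / 156 ^ 2 := by
  obtain ⟨m, hm, R, hR, hR_sum, hS_slack⟩ := exists_sum_slack_le_card_add (n := 3) (M := 1)
    (by norm_num) (by norm_num) (by simpa using forall_mem_Ioc_of_sum_le hpos hsum) hsum
  interval_cases m
  · have := sum_slack_le_sum_div (by norm_num) hR
    norm_num at hR_sum hS_slack this
    linarith
  · norm_num at hR_sum hS_slack
    have := sum_slack_le_of_sum_le_one_div_twelve (fun i hi => (hR i hi).1) (by linarith)
    linarith

end Sums

/-- If a finite set of demands in `(0,1/2]` has total demand at most `1`,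
then the total slack is less than `0.4232`. -/
theorem slack_sum_lt_of_no_large {ι : Type*} (Q : Finset ι) (d : ι → ℝ)
    (hd : ∀ i ∈ Q, 0 < d i ∧ d i ≤ 1 / 2)
    (hsum : ∑ i ∈ Q, d i ≤ 1) :
    ∑ i ∈ Q, slack (d i) < 0.4232 := by
  obtain ⟨m, hm, R, hR, hR_sum, hQ_slack⟩ := exists_sum_slack_le_card_add (n := 2) (M := 2)
    (by norm_num) (by norm_num) (by simpa using hd) hsum
  have hR_slack := sum_slack_le_sum_div (by norm_num) hR
  interval_cases m <;> norm_num at hR_sum hR_slack hQ_slack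
  · linarith
  · linarith
  · have := sum_slack_le_of_sum_le_one_div_three (fun i hi => (hR i hi).1) hR_sum
    linarith
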